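/- arXiv:hep-th/0106029 — 2 statements merged into one kernel-verified Lean document; each statement's English description precedes it below -/
import Mathlib

section
/- Peter–Weyl decomposition for a finite group, part (i), irreducibility of the summands: for a finite group G and an irreducible finite-dimensional complex representation (ρ, V) of G, the representation of the product group G×G on V* ⊗ V defined by (a,b) ↦ ρ*(a) ⊗ ρ(b) is irreducible. -/
/-!
Under `dualTensorHom`, `V* ⊗ V` becomes `End V` and `ρ*(a) ⊗ ρ(b)` becomes `X ↦ ρ(b) X ρ(a)⁻¹`,
so an invariant subspace is a subspace of `End V` stable under left and right multiplication by
`ρ(G)`. By Burnside's theorem (Schur's lemma plus Jacobson density) `ρ(G)` generates `End V` as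
an algebra, so such a subspace is a two-sided ideal of the simple ring `End V`.
-/

open Module
open scoped TensorProduct

section Burnside

variable {k A V : Type*} [Field k] [IsAlgClosed k] [Ring A] [Algebra k A] [AddCommGroup V]
  [Module k V] [Module A V] [IsScalarTower k A V] [IsSimpleModule A V] [FiniteDimensional k V]

theorem IsSimpleModule.lsmul_surjective_of_isAlgClosed :
    Function.Surjective (Algebra.lsmul k k V : A →ₐ[k] End k V) := by
  have : Module.Finite (End A V) V := .of_restrictScalars_finite k _ V
  intro f
  let f' : End (End A V) V :=
    { f with
      map_smul' φ v := by
        obtain ⟨c, rfl⟩ := (algebraMap_end_bijective_of_isAlgClosed (A := A) (V := V) k).2 φ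
        simp }
  obtain ⟨a, ha⟩ := Module.Finite.toModuleEnd_moduleEnd_surjective f'
  exact ⟨a, LinearMap.ext fun v => congr($ha v)⟩

end Burnside

theorem Subalgebra.eq_top_of_forall_invariant_eq_bot_or_eq_top {k V : Type*} [Field k]
    [IsAlgClosed k] [AddCommGroup V] [Module k V] [FiniteDimensional k V] [Nontrivial V]
    (A : Subalgebra k (End k V))
    (hA : ∀ U : Submodule k V, (∀ a ∈ A, ∀ v ∈ U, a v ∈ U) → U = ⊥ ∨ U = ⊤) : A = ⊤ := by
  have : IsSimpleModule A V :=
    { eq_bot_or_eq_top p := by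
        simpa only [Submodule.restrictScalars_eq_bot_iff, Submodule.restrictScalars_eq_top_iff]
          using hA (p.restrictScalars k) fun a ha v hv => p.smul_mem ⟨a, ha⟩ hv }
  refine eq_top_iff.mpr fun f _ => ?_
  obtain ⟨a, rfl⟩ := IsSimpleModule.lsmul_surjective_of_isAlgClosed (A := A) f
  exact a.2

theorem Representation.adjoin_range_eq_top {k G V : Type*} [Field k] [IsAlgClosed k] [Monoid G]
    [AddCommGroup V] [Module k V] [FiniteDimensional k V] [Nontrivial V]
    (ρ : Representation k G V)
    (hirr : ∀ U : Submodule k V, (∀ g : G, ∀ v ∈ U, ρ g v ∈ U) → U = ⊥ ∨ U = ⊤) :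
    Algebra.adjoin k (Set.range ρ) = ⊤ :=
  Subalgebra.eq_top_of_forall_invariant_eq_bot_or_eq_top _ fun U hU =>
    hirr U fun g => hU (ρ g) (Algebra.subset_adjoin ⟨g, rfl⟩)

instance Module.End.isSimpleRing {k V : Type*} [Field k] [AddCommGroup V] [Module k V]
    [FiniteDimensional k V] [Nontrivial V] : IsSimpleRing (End k V) :=
  have : Nonempty (Fin (finrank k V)) := ⟨⟨0, finrank_pos⟩⟩
  .of_ringEquiv (LinearMap.toMatrixAlgEquiv (Module.finBasis k V)).symm.toRingEquiv inferInstance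

section Ideal

variable {k R : Type*} [CommRing k] [Ring R] [Algebra k R] {S : Set R} (W : Submodule k R)

theorem Submodule.mul_mem_left_of_adjoin_eq_top (hS : Algebra.adjoin k S = ⊤)
    (hW : ∀ s ∈ S, ∀ x ∈ W, s * x ∈ W) (a : R) : ∀ x ∈ W, a * x ∈ W := by
  induction (hS ▸ Algebra.mem_top : a ∈ Algebra.adjoin k S) using Algebra.adjoin_induction with
  | mem s hs => exact hW s hs
  | algebraMap c =>
    exact fun x hx => by simpa [Algebra.algebraMap_eq_smul_one] using W.smul_mem c hx
  | add a b _ _ ha hb => exact fun x hx => by rw [add_mul]; exact W.add_mem (ha x hx) (hb x hx)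
  | mul a b _ _ ha hb => exact fun x hx => by rw [mul_assoc]; exact ha _ (hb x hx)

theorem Submodule.mul_mem_right_of_adjoin_eq_top (hS : Algebra.adjoin k S = ⊤)
    (hW : ∀ s ∈ S, ∀ x ∈ W, x * s ∈ W) (a : R) : ∀ x ∈ W, x * a ∈ W := by
  induction (hS ▸ Algebra.mem_top : a ∈ Algebra.adjoin k S) using Algebra.adjoin_induction with
  | mem s hs => exact hW s hs
  | algebraMap c =>
    exact fun x hx => by simpa [Algebra.algebraMap_eq_smul_one] using W.smul_mem c hx
  | add a b _ _ ha hb => exact fun x hx => by rw [mul_add]; exact W.add_mem (ha x hx) (hb x hx)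
  | mul a b _ _ ha hb => exact fun x hx => by rw [← mul_assoc]; exact hb _ (ha x hx)

theorem Submodule.eq_bot_or_eq_top_of_isSimpleRing [IsSimpleRing R]
    (hl : ∀ a, ∀ x ∈ W, a * x ∈ W) (hr : ∀ a, ∀ x ∈ W, x * a ∈ W) : W = ⊥ ∨ W = ⊤ := by
  let I : TwoSidedIdeal R := .mk' W W.zero_mem W.add_mem W.neg_mem (hl _ _) (hr _ _)
  have hI (x : R) : x ∈ I ↔ x ∈ W := TwoSidedIdeal.mem_mk' ..
  refine or_iff_not_imp_left.mpr fun hW => eq_top_iff.mpr fun a _ => ?_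
  obtain ⟨x, hxW, hx⟩ := W.ne_bot_iff.mp hW
  have hone : (1 : R) ∈ W := (hI 1).mp (IsSimpleRing.one_mem_of_ne_zero_mem I hx ((hI x).mpr hxW))
  simpa using hr a 1 hone

end Ideal

theorem dualTensorHom_map_dualMap {R M N M' N' : Type*} [CommRing R] [AddCommGroup M]
    [Module R M] [AddCommGroup N] [Module R N] [AddCommGroup M'] [Module R M'] [AddCommGroup N']
    [Module R N'] (f : M' →ₗ[R] M) (g : N →ₗ[R] N') (x : Dual R M ⊗[R] N) :
    dualTensorHom R M' N' (TensorProduct.map f.dualMap g x) = g ∘ₗ dualTensorHom R M N x ∘ₗ f := by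
  induction x using TensorProduct.induction_on with
  | zero => simp
  | tmul η v => ext; simp
  | add x y hx hy => simp [hx, hy, LinearMap.add_comp, LinearMap.comp_add]

theorem dual_tensor_rep_irreducible_general
    {G : Type*} [Group G]
    {V : Type*} [AddCommGroup V] [Module ℂ V] [FiniteDimensional ℂ V]
    (ρ : Representation ℂ G V)
    -- `(ρ, V)` is irreducible
    (hnt : Nontrivial V)
    (hirr : ∀ U : Submodule ℂ V, (∀ g : G, ∀ v ∈ U, ρ g v ∈ U) → U = ⊥ ∨ U = ⊤) :
    -- the representation `(a, b) ↦ ρ*(a) ⊗ ρ(b)` of `G × G` on `V* ⊗ V` is irreducible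
    Nontrivial (Module.Dual ℂ V ⊗[ℂ] V) ∧
    ∀ U : Submodule ℂ (Module.Dual ℂ V ⊗[ℂ] V),
      (∀ (a b : G), ∀ x ∈ U, TensorProduct.map ((ρ a⁻¹).dualMap) (ρ b) x ∈ U) →
      U = ⊥ ∨ U = ⊤ := by
  let e := dualTensorHomEquiv ℂ V V
  refine ⟨e.toEquiv.nontrivial, fun U hU => ?_⟩
  let W := U.map (e : Dual ℂ V ⊗[ℂ] V →ₗ[ℂ] End ℂ V)
  have hρ := ρ.adjoin_range_eq_top hirr
  have hl : ∀ s ∈ Set.range ρ, ∀ X ∈ W, s * X ∈ W := by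
    rintro _ ⟨b, rfl⟩ _ ⟨x, hx, rfl⟩
    exact ⟨_, hU 1 b x hx, (dualTensorHom_map_dualMap _ _ x).trans
      (by simp [e, Module.End.mul_eq_comp, Module.End.one_eq_id])⟩
  have hr : ∀ s ∈ Set.range ρ, ∀ X ∈ W, X * s ∈ W := by
    rintro _ ⟨a, rfl⟩ _ ⟨x, hx, rfl⟩
    exact ⟨_, hU a⁻¹ 1 x hx, (dualTensorHom_map_dualMap _ _ x).trans
      (by simp [e, Module.End.mul_eq_comp, Module.End.one_eq_id])⟩
  exact (W.eq_bot_or_eq_top_of_isSimpleRing (W.mul_mem_left_of_adjoin_eq_top hρ hl)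
    (W.mul_mem_right_of_adjoin_eq_top hρ hr)).imp
    Submodule.map_eq_bot_iff.mp Submodule.map_eq_top_iff.mp

/-- **Irreducibility of the Peter–Weyl summands.** -/
theorem dual_tensor_rep_irreducible
    {G : Type*} [Group G] [Fintype G]
    {V : Type*} [AddCommGroup V] [Module ℂ V] [FiniteDimensional ℂ V]
    (ρ : Representation ℂ G V)
    -- `(ρ, V)` is irreducible
    (hnt : Nontrivial V)
    (hirr : ∀ U : Submodule ℂ V, (∀ g : G, ∀ v ∈ U, ρ g v ∈ U) → U = ⊥ ∨ U = ⊤) :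
    -- the representation `(a, b) ↦ ρ*(a) ⊗ ρ(b)` of `G × G` on `V* ⊗ V` is irreducible
    Nontrivial (Module.Dual ℂ V ⊗[ℂ] V) ∧
    ∀ U : Submodule ℂ (Module.Dual ℂ V ⊗[ℂ] V),
      (∀ (a b : G), ∀ x ∈ U, TensorProduct.map ((ρ a⁻¹).dualMap) (ρ b) x ∈ U) →
      U = ⊥ ∨ U = ⊤ :=
  dual_tensor_rep_irreducible_general ρ hnt hirr
end

section
/- Plancherel-type norm formula for a finite group: let f : G → ℂ be any function, and let (f_ρ)_{ρ∈Irr}, f_ρ ∈ V_ρ* ⊗ V_ρ, be the unique family such that f(g) = ∑_{ρ∈Irr} (ev_g f_ρ) for all g ∈ G, where ev_g is the linear map V_ρ* ⊗ V_ρ → ℂ sending η ⊗ v to η(ρ(g)v). Then (1/|G|)·∑_{g∈G} |f(g)|² = ∑_{ρ∈Irr} (1/dim V_ρ)·‖f_ρ‖², where ‖·‖ is the norm on V_ρ* ⊗ V_ρ induced by the Hilbert space inner product on V_ρ and the dual inner product on V_ρ* (making the dual basis of an orthonormal basis orthonormal). -/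
/-!
Averaging a matrix unit `E` over the group, `∑_g ρ_j(g⁻¹) E ρ_i(g)`, produces an intertwiner from
`ρ_i` to `ρ_j`. By Schur's lemma it vanishes when `i ≠ j`, and for `i = j` it is a scalar, which
its trace determines. Together with unitarity, `ρ(g⁻¹) = ρ(g)ᴴ`, this gives the Schur orthogonality
relations: the matrix coefficients `g ↦ ρ_i(g)_{ab}` form an orthogonal family in `ℂ^G`, and each
has squared norm `|G| / dim ρ_i`. The formula is then Pythagoras' theorem for the expansion
`f = ∑ A_{iab} ρ_i(·)_{ab}`, because `‖f_ρ‖² = ∑_{a,b} |A_{ab}|²` in orthonormal coordinates.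
-/

open Matrix Function ComplexConjugate

section Schur

variable {K G : Type*} [Field K] {m n : Type*} [Fintype m] [Fintype n]

def IsIrreducibleMatrixFamily (σ : G → Matrix n n K) : Prop :=
  ∀ U : Submodule K (n → K), (∀ g, ∀ u ∈ U, σ g *ᵥ u ∈ U) → U = ⊥ ∨ U = ⊤

theorem Matrix.eq_zero_of_intertwines_of_not_bijective {σ : G → Matrix m m K}
    {τ : G → Matrix n n K} (hσ : IsIrreducibleMatrixFamily σ) (hτ : IsIrreducibleMatrixFamily τ)
    {T : Matrix n m K} (hT : ∀ g, τ g * T = T * σ g) (hbij : ¬ Bijective T.mulVec) :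
    T = 0 := by
  have hker : LinearMap.ker (mulVecLin T) = ⊥ ∨ LinearMap.ker (mulVecLin T) = ⊤ := by
    refine hσ _ fun g u hu => ?_
    simp only [LinearMap.mem_ker, mulVecLin_apply] at hu ⊢
    rw [mulVec_mulVec, ← hT, ← mulVec_mulVec, hu, mulVec_zero]
  have hrange : LinearMap.range (mulVecLin T) = ⊥ ∨ LinearMap.range (mulVecLin T) = ⊤ := by
    refine hτ _ fun g u ⟨v, hv⟩ => ⟨σ g *ᵥ v, ?_⟩
    rw [← hv, mulVecLin_apply, mulVecLin_apply, mulVec_mulVec, ← hT, ← mulVec_mulVec]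
  have hzero : mulVecLin T = 0 → T = 0 := fun h =>
    mulVec_injective (by rw [← coe_mulVecLin, h]; ext; simp)
  rcases hker with hker | hker
  · rcases hrange with hrange | hrange
    · exact hzero (LinearMap.range_eq_bot.mp hrange)
    · exact absurd ⟨LinearMap.ker_eq_bot.mp hker, LinearMap.range_eq_top.mp hrange⟩ hbij
  · exact hzero (LinearMap.ker_eq_top.mp hker)

theorem Matrix.exists_eq_smul_one_of_commutes [IsAlgClosed K] [DecidableEq n] [Nonempty n]
    {σ : G → Matrix n n K} (hσ : IsIrreducibleMatrixFamily σ) {T : Matrix n n K}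
    (hT : ∀ g, σ g * T = T * σ g) : ∃ μ : K, T = μ • 1 := by
  obtain ⟨μ, hμ⟩ := Module.End.exists_eigenvalue (mulVecLin T)
  have htop : Module.End.eigenspace (mulVecLin T) μ = ⊤ := by
    refine (hσ _ fun g u hu => ?_).resolve_left hμ
    rw [Module.End.mem_eigenspace_iff, mulVecLin_apply] at hu ⊢
    rw [mulVec_mulVec, ← hT, ← mulVec_mulVec, hu, mulVec_smul]
  refine ⟨μ, mulVec_injective (funext fun v => ?_)⟩
  have hv := Module.End.mem_eigenspace_iff.mp (htop ▸ Submodule.mem_top : v ∈ _)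
  rw [← mulVecLin_apply, hv, smul_mulVec, one_mulVec]

end Schur

theorem MonoidHom.map_inv_mul_map {G M : Type*} [Group G] [MulOneClass M] (σ : G →* M) (g : G) :
    σ g⁻¹ * σ g = 1 := by
  rw [← map_mul, inv_mul_cancel, map_one]

theorem MonoidHom.map_mul_map_inv {G M : Type*} [Group G] [MulOneClass M] (σ : G →* M) (g : G) :
    σ g * σ g⁻¹ = 1 := by
  rw [← map_mul, mul_inv_cancel, map_one]

theorem MonoidHom.map_inv_eq_conjTranspose {K G n : Type*} [Semiring K] [Star K] [Group G]
    [Fintype n] [DecidableEq n] {σ : G →* Matrix n n K} (hσ : ∀ g, (σ g)ᴴ * σ g = 1) (g : G) :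
    σ g⁻¹ = (σ g)ᴴ :=
  (left_inv_eq_right_inv (hσ g) (σ.map_mul_map_inv g)).symm

theorem Matrix.trace_single {R m : Type*} [AddCommMonoid R] [Fintype m] [DecidableEq m]
    (c a : m) (x : R) : trace (single c a x) = if c = a then x else 0 := by
  split_ifs with h
  · rw [h, trace_single_eq_same]
  · exact trace_single_eq_of_ne _ _ _ h

section Orthogonality

variable {K G : Type*} [Field K] [Group G] [Fintype G] {m n : Type*} [Fintype m] [Fintype n]
  [DecidableEq m] [DecidableEq n] (σ : G →* Matrix m m K) (τ : G →* Matrix n n K)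

theorem sum_inv_mul_mul_intertwines (E : Matrix n m K) (h : G) :
    τ h * ∑ g, τ g⁻¹ * E * σ g = (∑ g, τ g⁻¹ * E * σ g) * σ h := by
  rw [Matrix.mul_sum, Matrix.sum_mul]
  refine Fintype.sum_equiv (Equiv.mulRight h⁻¹) _ _ fun g => ?_
  simp only [Equiv.coe_mulRight, _root_.mul_inv_rev, inv_inv, map_mul, Matrix.mul_assoc,
    σ.map_inv_mul_map, Matrix.mul_one]

theorem sum_inv_mul_single_mul_apply (a b : m) (c e : n) :
    (∑ g, τ g⁻¹ * single c a (1 : K) * σ g) e b = ∑ g, τ g⁻¹ e c * σ g a b := by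
  simp [Matrix.sum_apply, mul_apply, single, ite_and, mul_ite, ite_mul, Finset.sum_ite_eq]

theorem sum_inv_apply_mul_apply_eq_zero (hσ : IsIrreducibleMatrixFamily σ)
    (hτ : IsIrreducibleMatrixFamily τ)
    (hne : ∀ T : Matrix n m K, (∀ g, τ g * T = T * σ g) → ¬ Bijective T.mulVec)
    (a b : m) (c e : n) : ∑ g, τ g⁻¹ e c * σ g a b = 0 := by
  rw [← sum_inv_mul_single_mul_apply,
    eq_zero_of_intertwines_of_not_bijective hσ hτ (sum_inv_mul_mul_intertwines σ τ _)
      (hne _ (sum_inv_mul_mul_intertwines σ τ _)), Matrix.zero_apply]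

theorem card_mul_sum_inv_apply_mul_apply [IsAlgClosed K] (hσ : IsIrreducibleMatrixFamily σ)
    (a b c e : m) :
    Fintype.card m * ∑ g, σ g⁻¹ e c * σ g a b
      = if a = c ∧ b = e then (Fintype.card G : K) else 0 := by
  have : Nonempty m := ⟨a⟩
  obtain ⟨μ, hμ⟩ :=
    exists_eq_smul_one_of_commutes hσ (sum_inv_mul_mul_intertwines σ σ (single c a 1))
  have htrace : trace (∑ g, σ g⁻¹ * single c a (1 : K) * σ g)
      = if c = a then (Fintype.card G : K) else 0 := by
    simp only [trace_sum, trace_mul_cycle _ (single c a _), σ.map_mul_map_inv, Matrix.one_mul,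
      trace_single, Finset.sum_const, Finset.card_univ, nsmul_eq_mul, mul_ite, mul_one, mul_zero]
  rw [hμ, trace_smul, trace_one, smul_eq_mul] at htrace
  rw [← sum_inv_mul_single_mul_apply, hμ, Matrix.smul_apply, one_apply, smul_eq_mul]
  split_ifs at htrace ⊢ <;> grind

end Orthogonality

theorem sum_norm_sq_sum_mul_of_orthogonal {𝕜 α κ : Type*} [RCLike 𝕜] [Fintype α] [Fintype κ]
    [DecidableEq κ] {φ : κ → α → 𝕜} {w : κ → ℝ}
    (horth : ∀ k k', ∑ x, φ k x * conj (φ k' x) = if k = k' then (w k : 𝕜) else 0)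
    (c : κ → 𝕜) :
    ∑ x, ‖∑ k, c k * φ k x‖ ^ 2 = ∑ k, ‖c k‖ ^ 2 * w k := by
  apply RCLike.ofReal_injective (K := 𝕜)
  push_cast
  simp only [← RCLike.mul_conj]
  calc ∑ x, (∑ k, c k * φ k x) * conj (∑ k', c k' * φ k' x)
      = ∑ k, ∑ k', c k * conj (c k') * ∑ x, φ k x * conj (φ k' x) := by
        simp only [map_sum, map_mul, Finset.sum_mul_sum]
        rw [Finset.sum_comm]
        refine Finset.sum_congr rfl fun k _ => ?_
        rw [Finset.sum_comm]
        refine Finset.sum_congr rfl fun k' _ => ?_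
        rw [Finset.mul_sum]
        exact Finset.sum_congr rfl fun x _ => by ring
    _ = ∑ k, c k * conj (c k) * w k := by
        simp only [horth, mul_ite, mul_zero, Finset.sum_ite_eq, Finset.mem_univ, if_true]

section MatrixCoefficients

variable {R G ι : Type*} {n : ι → Type*}

def matrixCoeff (ρ : ∀ i, G → Matrix (n i) (n i) R) (k : Σ i, n i × n i) (g : G) : R :=
  ρ k.1 g k.2.1 k.2.2

variable [Group G] [Fintype G] [∀ i, Fintype (n i)] [∀ i, DecidableEq (n i)]

theorem sum_matrixCoeff_mul_conj [DecidableEq ι] (σ : ∀ i, G →* Matrix (n i) (n i) ℂ)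
    (hunit : ∀ i g, (σ i g)ᴴ * σ i g = 1) (hirr : ∀ i, IsIrreducibleMatrixFamily (σ i))
    (hne : ∀ i j, i ≠ j → ∀ T : Matrix (n j) (n i) ℂ,
      (∀ g, σ j g * T = T * σ i g) → ¬ Bijective T.mulVec)
    (k k' : Σ i, n i × n i) :
    ∑ g, matrixCoeff (fun i => σ i) k g * conj (matrixCoeff (fun i => σ i) k' g)
      = if k = k' then (Fintype.card G / Fintype.card (n k.1) : ℂ) else 0 := by
  obtain ⟨i, a, b⟩ := k
  obtain ⟨j, c, e⟩ := k'
  have hconj : ∀ g, conj (σ j g c e) = σ j g⁻¹ e c := fun g => by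
    rw [(σ j).map_inv_eq_conjTranspose (hunit j), conjTranspose_apply, starRingEnd_apply]
  simp only [matrixCoeff, hconj, mul_comm (σ i _ a b)]
  by_cases hij : i = j
  · subst hij
    have : Nonempty (n i) := ⟨a⟩
    have hcard : (Fintype.card (n i) : ℂ) ≠ 0 := Nat.cast_ne_zero.mpr Fintype.card_ne_zero
    rw [← mul_right_inj' hcard, card_mul_sum_inv_apply_mul_apply (σ i) (hirr i)]
    simp only [Sigma.mk.inj_iff, heq_eq_eq, Prod.mk.injEq, true_and]
    split_ifs
    · field_simp
    · exact (mul_zero _).symm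
  · rw [if_neg fun h => hij (Sigma.mk.inj_iff.mp h).1,
      sum_inv_apply_mul_apply_eq_zero (σ i) (σ j) (hirr i) (hirr j) (hne i j hij)]

end MatrixCoefficients

theorem plancherel_norm_formula_general
    {G : Type*} [Group G] [Fintype G] {ι : Type*} [Fintype ι]
    (d : ι → ℕ) (ρ : ∀ i, G → Matrix (Fin (d i)) (Fin (d i)) ℂ)
    -- each `ρ i` is a unitary representation
    (hone : ∀ i, ρ i 1 = 1)
    (hmul : ∀ i (a b : G), ρ i (a * b) = ρ i a * ρ i b)
    (hunit : ∀ i (g : G), (ρ i g).conjTranspose * ρ i g = 1)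
    -- each `ρ i` is irreducible
    (hirr : ∀ i (U : Submodule ℂ (Fin (d i) → ℂ)),
      (∀ g : G, ∀ u ∈ U, (ρ i g).mulVec u ∈ U) → U = ⊥ ∨ U = ⊤)
    -- the `ρ i` are pairwise non-isomorphic
    (hpair : ∀ i j, i ≠ j →
      ¬∃ T : Matrix (Fin (d j)) (Fin (d i)) ℂ,
        Function.Bijective T.mulVec ∧ ∀ g : G, ρ j g * T = T * ρ i g)
    -- `f : G → ℂ` with Peter–Weyl components `f_ρ` of coordinate matrices `A i`
    (f : G → ℂ) (A : ∀ i, Matrix (Fin (d i)) (Fin (d i)) ℂ)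
    (hA : ∀ g : G, f g = ∑ i, ∑ a, ∑ b, A i a b * ρ i g a b) :
    (Fintype.card G : ℝ)⁻¹ * ∑ g : G, ‖f g‖ ^ 2
      = ∑ i, (d i : ℝ)⁻¹ * ∑ a, ∑ b, ‖A i a b‖ ^ 2 := by
  classical
  let σ i : G →* Matrix (Fin (d i)) (Fin (d i)) ℂ := ⟨⟨ρ i, hone i⟩, hmul i⟩
  have horth (k k') : ∑ g, matrixCoeff ρ k g * conj (matrixCoeff ρ k' g)
      = if k = k' then ((Fintype.card G / d k.1 : ℝ) : ℂ) else 0 := by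
    refine (sum_matrixCoeff_mul_conj σ hunit hirr
      (fun i j hij T hT hbij => hpair i j hij ⟨T, hbij, hT⟩) k k').trans ?_
    simp
  have hf (g) : f g = ∑ k, A k.1 k.2.1 k.2.2 * matrixCoeff ρ k g := by
    simp only [hA, matrixCoeff, Fintype.sum_sigma, Fintype.sum_prod_type]
  have hcard : (Fintype.card G : ℝ) ≠ 0 := Nat.cast_ne_zero.mpr Fintype.card_ne_zero
  simp only [hf]
  rw [sum_norm_sq_sum_mul_of_orthogonal (w := fun k => Fintype.card G / d k.1) horth]
  simp only [Fintype.sum_sigma, Fintype.sum_prod_type, Finset.mul_sum]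
  refine Finset.sum_congr rfl fun i _ => Finset.sum_congr rfl fun a _ =>
    Finset.sum_congr rfl fun b _ => ?_
  field_simp

/-- **Plancherel-type norm formula for a finite group.** -/
theorem plancherel_norm_formula
    {G : Type*} [Group G] [Fintype G] {ι : Type*} [Fintype ι]
    (d : ι → ℕ) (ρ : ∀ i, G → Matrix (Fin (d i)) (Fin (d i)) ℂ)
    -- each `ρ i` is a unitary representation
    (hone : ∀ i, ρ i 1 = 1)
    (hmul : ∀ i (a b : G), ρ i (a * b) = ρ i a * ρ i b)
    (hunit : ∀ i (g : G), (ρ i g).conjTranspose * ρ i g = 1)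
    -- each `ρ i` is irreducible
    (hdpos : ∀ i, 0 < d i)
    (hirr : ∀ i (U : Submodule ℂ (Fin (d i) → ℂ)),
      (∀ g : G, ∀ u ∈ U, (ρ i g).mulVec u ∈ U) → U = ⊥ ∨ U = ⊤)
    -- the `ρ i` are pairwise non-isomorphic
    (hpair : ∀ i j, i ≠ j →
      ¬∃ T : Matrix (Fin (d j)) (Fin (d i)) ℂ,
        Function.Bijective T.mulVec ∧ ∀ g : G, ρ j g * T = T * ρ i g)
    -- every irreducible unitary representation of `G` is isomorphic to some `ρ i`
    (hcompl : ∀ (n : ℕ) (σ : G → Matrix (Fin n) (Fin n) ℂ),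
      σ 1 = 1 → (∀ a b : G, σ (a * b) = σ a * σ b) →
      (∀ g : G, (σ g).conjTranspose * σ g = 1) → 0 < n →
      (∀ U : Submodule ℂ (Fin n → ℂ),
        (∀ g : G, ∀ u ∈ U, (σ g).mulVec u ∈ U) → U = ⊥ ∨ U = ⊤) →
      ∃ i, ∃ T : Matrix (Fin n) (Fin (d i)) ℂ,
        Function.Bijective T.mulVec ∧ ∀ g : G, σ g * T = T * ρ i g)
    -- `f : G → ℂ` with Peter–Weyl components `f_ρ` of coordinate matrices `A i`
    (f : G → ℂ) (A : ∀ i, Matrix (Fin (d i)) (Fin (d i)) ℂ)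
    (hA : ∀ g : G, f g = ∑ i, ∑ a, ∑ b, A i a b * ρ i g a b) :
    (Fintype.card G : ℝ)⁻¹ * ∑ g : G, ‖f g‖ ^ 2
      = ∑ i, (d i : ℝ)⁻¹ * ∑ a, ∑ b, ‖A i a b‖ ^ 2 :=
  plancherel_norm_formula_general d ρ hone hmul hunit hirr hpair f A hA
end
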